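/- arXiv:2203.12023 — 3 statements merged into one kernel-verified Lean document; each statement's English description precedes it below -/
import Mathlib

section
/- Let μ and ν be σ-finite measures on measurable spaces 𝒳 and 𝒴 respectively. Let p(x, y) = p₁(x) p₂(y|x) and q(x, y) = q₁(x) q₂(y|x) be probability densities on 𝒳 × 𝒴 with respect to μ ⊗ ν, where p₁, q₁ are probability densities on 𝒳 with respect to μ and, for each x, p₂(·|x), q₂(·|x) are probability densities on 𝒴 with respect to ν. Suppose there is a constant c ∈ [0, 2] such that the squared Hellinger distance between the conditionals satisfies H²(p₂(·|x), q₂(·|x)) ≤ c for every x ∈ 𝒳. Then the squared Hellinger distance between the joint densities satisfies H²(p, q) ≤ 2 − 2(1 − H²(p₁, q₁)/2)(1 − c/2), i.e., H²(p, q) ≤ H²(p₁, q₁) + c − H²(p₁, q₁)·c/2. -/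
/-!
The Bhattacharyya coefficient `BC(f, g) = ∫ √f √g` of two probability densities satisfies
`H²(f, g) = 2 - 2 BC(f, g)`. For the joint densities, Fubini and `√(ab) = √a √b` factor it as
`BC(p, q) = ∫ √p₁ √q₁ · BC(p₂(·|x), q₂(·|x)) dμ(x)`; the conditional coefficients lie in
`[1 - c/2, 1]`, so `BC(p, q) ≥ (1 - c/2) BC(p₁, q₁)`, which is the claim.
-/

open MeasureTheory

/-- Squared Hellinger distance between two densities `f, g` with respect to a base
measure `lam`: `H²(f, g) = ∫ (√f - √g)² dlam`. -/
noncomputable def hellingerSq {α : Type*} [MeasurableSpace α] (lam : Measure α)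
    (f g : α → ℝ) : ℝ :=
  ∫ x, (Real.sqrt (f x) - Real.sqrt (g x)) ^ 2 ∂lam

noncomputable def bhattacharyya {α : Type*} [MeasurableSpace α] (lam : Measure α)
    (f g : α → ℝ) : ℝ :=
  ∫ x, Real.sqrt (f x) * Real.sqrt (g x) ∂lam

structure IsProbDensity {α : Type*} [MeasurableSpace α] (lam : Measure α) (f : α → ℝ) :
    Prop where
  nonneg : 0 ≤ f
  integrable : Integrable f lam
  integral_eq_one : ∫ x, f x ∂lam = 1

section Densities

variable {α : Type*} [MeasurableSpace α] {lam : Measure α} {f g : α → ℝ}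

lemma hellingerSq_nonneg : 0 ≤ hellingerSq lam f g :=
  integral_nonneg fun _ => sq_nonneg _

lemma bhattacharyya_nonneg : 0 ≤ bhattacharyya lam f g :=
  integral_nonneg fun _ => mul_nonneg (Real.sqrt_nonneg _) (Real.sqrt_nonneg _)

lemma sqrt_mul_sqrt_le_abs_add_abs (a b : ℝ) : √a * √b ≤ |a| + |b| := by
  have ha : √a ^ 2 ≤ |a| := by rw [Real.sq_sqrt']; exact max_le (le_abs_self a) (abs_nonneg a)
  have hb : √b ^ 2 ≤ |b| := by rw [Real.sq_sqrt']; exact max_le (le_abs_self b) (abs_nonneg b)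
  nlinarith [sq_nonneg (√a - √b)]

lemma MeasureTheory.Integrable.sqrt_mul_sqrt (hf : Integrable f lam) (hg : Integrable g lam) :
    Integrable (fun x => √(f x) * √(g x)) lam := by
  refine (hf.norm.add hg.norm).mono' ?_ (.of_forall fun x => ?_)
  · exact (Real.continuous_sqrt.comp_aestronglyMeasurable hf.aestronglyMeasurable).mul
      (Real.continuous_sqrt.comp_aestronglyMeasurable hg.aestronglyMeasurable)
  · rw [Real.norm_of_nonneg (by positivity)]
    exact sqrt_mul_sqrt_le_abs_add_abs (f x) (g x)

lemma hellingerSq_eq (hf0 : 0 ≤ f) (hg0 : 0 ≤ g) (hf : Integrable f lam)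
    (hg : Integrable g lam) :
    hellingerSq lam f g = ∫ x, f x ∂lam + ∫ x, g x ∂lam - 2 * bhattacharyya lam f g := by
  have hexpand : ∀ x, (√(f x) - √(g x)) ^ 2 = f x + g x - 2 * (√(f x) * √(g x)) := fun x => by
    rw [sub_sq, Real.sq_sqrt (hf0 x), Real.sq_sqrt (hg0 x)]
    ring
  have hfg : Integrable (fun x => f x + g x) lam := hf.add hg
  simp only [hellingerSq, bhattacharyya, hexpand]
  rw [integral_sub hfg ((hf.sqrt_mul_sqrt hg).const_mul 2), integral_add hf hg,
    integral_const_mul]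

lemma IsProbDensity.hellingerSq_eq (hf : IsProbDensity lam f) (hg : IsProbDensity lam g) :
    hellingerSq lam f g = 2 - 2 * bhattacharyya lam f g := by
  rw [_root_.hellingerSq_eq hf.nonneg hg.nonneg hf.integrable hg.integrable,
    hf.integral_eq_one, hg.integral_eq_one]
  norm_num

lemma IsProbDensity.bhattacharyya_le_one (hf : IsProbDensity lam f)
    (hg : IsProbDensity lam g) : bhattacharyya lam f g ≤ 1 := by
  have := hf.hellingerSq_eq hg ▸ hellingerSq_nonneg (lam := lam) (f := f) (g := g)
  linarith

end Densities

section Product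

variable {α β : Type*} [MeasurableSpace α] [MeasurableSpace β] {μ : Measure α} {ν : Measure β}
  [SFinite ν] {p₁ q₁ : α → ℝ} {p₂ q₂ : α → β → ℝ}

lemma IsProbDensity.prod_cond [SFinite μ] (hp₁ : IsProbDensity μ p₁)
    (hp₂meas : AEStronglyMeasurable (Function.uncurry p₂) (μ.prod ν))
    (hp₂ : ∀ x, IsProbDensity ν (p₂ x)) :
    IsProbDensity (μ.prod ν) (fun z => p₁ z.1 * p₂ z.1 z.2) := by
  have hslice x : ∫ y, p₁ x * p₂ x y ∂ν = p₁ x := by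
    rw [integral_const_mul, (hp₂ x).integral_eq_one, mul_one]
  have hmeas : AEStronglyMeasurable (fun z : α × β => p₁ z.1 * p₂ z.1 z.2) (μ.prod ν) :=
    hp₁.integrable.aestronglyMeasurable.comp_fst.mul hp₂meas
  have hnonneg : 0 ≤ fun z : α × β => p₁ z.1 * p₂ z.1 z.2 :=
    fun z => mul_nonneg (hp₁.nonneg z.1) ((hp₂ z.1).nonneg z.2)
  have hint : Integrable (fun z : α × β => p₁ z.1 * p₂ z.1 z.2) (μ.prod ν) := by
    refine (integrable_prod_iff hmeas).2 ⟨.of_forall fun x => (hp₂ x).integrable.const_mul (p₁ x),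
      hp₁.integrable.congr (.of_forall fun x => ?_)⟩
    simp only [Real.norm_of_nonneg (hnonneg (x, _)), hslice]
  refine ⟨hnonneg, hint, ?_⟩
  rw [integral_prod _ hint, ← hp₁.integral_eq_one]
  exact integral_congr_ae (.of_forall hslice)

lemma bhattacharyya_prod_cond [SFinite μ] (hp₁0 : 0 ≤ p₁) (hq₁0 : 0 ≤ q₁)
    (hp : Integrable (fun z => p₁ z.1 * p₂ z.1 z.2) (μ.prod ν))
    (hq : Integrable (fun z => q₁ z.1 * q₂ z.1 z.2) (μ.prod ν)) :
    bhattacharyya (μ.prod ν) (fun z => p₁ z.1 * p₂ z.1 z.2) (fun z => q₁ z.1 * q₂ z.1 z.2)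
      = ∫ x, √(p₁ x) * √(q₁ x) * bhattacharyya ν (p₂ x) (q₂ x) ∂μ := by
  rw [bhattacharyya, integral_prod _ (hp.sqrt_mul_sqrt hq)]
  refine integral_congr_ae (.of_forall fun x => ?_)
  simp only [Real.sqrt_mul (hp₁0 x), Real.sqrt_mul (hq₁0 x), bhattacharyya,
    ← integral_const_mul]
  congr with y
  ring

end Product

lemma mul_integral_le_integral_mul {α : Type*} [MeasurableSpace α] {lam : Measure α}
    {K h : α → ℝ} {a b : ℝ} (hK : Integrable K lam) (hK0 : 0 ≤ K)
    (hh : AEStronglyMeasurable h lam) (hah : ∀ x, a ≤ h x) (hhb : ∀ x, ‖h x‖ ≤ b) :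
    a * ∫ x, K x ∂lam ≤ ∫ x, K x * h x ∂lam := by
  rw [← integral_const_mul]
  refine integral_mono (hK.const_mul a) ?_ fun x => ?_
  · simpa only [mul_comm (K _)] using hK.bdd_mul hh (.of_forall hhb)
  · nlinarith [mul_nonneg (hK0 x) (sub_nonneg.2 (hah x))]

theorem hellingerSq_joint_le_general
    {𝒳 𝒴 : Type*} [MeasurableSpace 𝒳] [MeasurableSpace 𝒴]
    (μ : Measure 𝒳) (ν : Measure 𝒴) [SigmaFinite μ] [SigmaFinite ν]
    (p₁ q₁ : 𝒳 → ℝ) (p₂ q₂ : 𝒳 → 𝒴 → ℝ)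
    (hp₂meas : Measurable (Function.uncurry p₂)) (hq₂meas : Measurable (Function.uncurry q₂))
    (hp₁pos : ∀ x, 0 ≤ p₁ x) (hq₁pos : ∀ x, 0 ≤ q₁ x)
    (hp₂pos : ∀ x y, 0 ≤ p₂ x y) (hq₂pos : ∀ x y, 0 ≤ q₂ x y)
    (hp₁int : Integrable p₁ μ) (hq₁int : Integrable q₁ μ)
    (hp₂int : ∀ x, Integrable (p₂ x) ν) (hq₂int : ∀ x, Integrable (q₂ x) ν)
    (hp₁dens : ∫ x, p₁ x ∂μ = 1) (hq₁dens : ∫ x, q₁ x ∂μ = 1)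
    (hp₂dens : ∀ x, ∫ y, p₂ x y ∂ν = 1) (hq₂dens : ∀ x, ∫ y, q₂ x y ∂ν = 1)
    (c : ℝ)
    (hcond : ∀ x, hellingerSq ν (p₂ x) (q₂ x) ≤ c) :
    hellingerSq (μ.prod ν) (fun z => p₁ z.1 * p₂ z.1 z.2) (fun z => q₁ z.1 * q₂ z.1 z.2)
      ≤ 2 - 2 * (1 - hellingerSq μ p₁ q₁ / 2) * (1 - c / 2) := by
  have hp₁ : IsProbDensity μ p₁ := ⟨hp₁pos, hp₁int, hp₁dens⟩
  have hq₁ : IsProbDensity μ q₁ := ⟨hq₁pos, hq₁int, hq₁dens⟩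
  have hp₂ x : IsProbDensity ν (p₂ x) := ⟨hp₂pos x, hp₂int x, hp₂dens x⟩
  have hq₂ x : IsProbDensity ν (q₂ x) := ⟨hq₂pos x, hq₂int x, hq₂dens x⟩
  have hp := hp₁.prod_cond hp₂meas.aestronglyMeasurable hp₂
  have hq := hq₁.prod_cond hq₂meas.aestronglyMeasurable hq₂
  have hBC_meas : AEStronglyMeasurable (fun x => bhattacharyya ν (p₂ x) (q₂ x)) μ :=
    ((hp₂meas.sqrt.mul hq₂meas.sqrt).aestronglyMeasurable (μ := μ.prod ν)).integral_prod_right'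
  have hBC_ge x : 1 - c / 2 ≤ bhattacharyya ν (p₂ x) (q₂ x) := by
    linarith [hcond x, (hp₂ x).hellingerSq_eq (hq₂ x)]
  have hBC_norm x : ‖bhattacharyya ν (p₂ x) (q₂ x)‖ ≤ 1 := by
    rw [Real.norm_of_nonneg bhattacharyya_nonneg]
    exact (hp₂ x).bhattacharyya_le_one (hq₂ x)
  have hBC_lower : (1 - c / 2) * bhattacharyya μ p₁ q₁
      ≤ ∫ x, √(p₁ x) * √(q₁ x) * bhattacharyya ν (p₂ x) (q₂ x) ∂μ :=
    mul_integral_le_integral_mul (hp₁int.sqrt_mul_sqrt hq₁int)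
      (fun x => mul_nonneg (Real.sqrt_nonneg _) (Real.sqrt_nonneg _)) hBC_meas hBC_ge hBC_norm
  rw [hp.hellingerSq_eq hq, hp₁.hellingerSq_eq hq₁,
    bhattacharyya_prod_cond hp₁pos hq₁pos hp.integrable hq.integrable]
  linarith

/-- **Hellinger decomposition for joint densities.** If `p(x,y) = p₁(x) p₂(y|x)` and
`q(x,y) = q₁(x) q₂(y|x)` are probability densities on `𝒳 × 𝒴` with respect to `μ ⊗ ν`,
and the squared Hellinger distance between the conditionals is bounded by `c ∈ [0, 2]`
uniformly in `x`, then
`H²(p, q) ≤ 2 - 2 (1 - H²(p₁, q₁)/2)(1 - c/2)`. -/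
theorem hellingerSq_joint_le
    {𝒳 𝒴 : Type*} [MeasurableSpace 𝒳] [MeasurableSpace 𝒴]
    (μ : Measure 𝒳) (ν : Measure 𝒴) [SigmaFinite μ] [SigmaFinite ν]
    (p₁ q₁ : 𝒳 → ℝ) (p₂ q₂ : 𝒳 → 𝒴 → ℝ)
    (hp₁meas : Measurable p₁) (hq₁meas : Measurable q₁)
    (hp₂meas : Measurable (Function.uncurry p₂)) (hq₂meas : Measurable (Function.uncurry q₂))
    (hp₁pos : ∀ x, 0 ≤ p₁ x) (hq₁pos : ∀ x, 0 ≤ q₁ x)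
    (hp₂pos : ∀ x y, 0 ≤ p₂ x y) (hq₂pos : ∀ x y, 0 ≤ q₂ x y)
    (hp₁int : Integrable p₁ μ) (hq₁int : Integrable q₁ μ)
    (hp₂int : ∀ x, Integrable (p₂ x) ν) (hq₂int : ∀ x, Integrable (q₂ x) ν)
    (hp₁dens : ∫ x, p₁ x ∂μ = 1) (hq₁dens : ∫ x, q₁ x ∂μ = 1)
    (hp₂dens : ∀ x, ∫ y, p₂ x y ∂ν = 1) (hq₂dens : ∀ x, ∫ y, q₂ x y ∂ν = 1)
    (c : ℝ) (hc0 : 0 ≤ c) (hc2 : c ≤ 2)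
    (hcond : ∀ x, hellingerSq ν (p₂ x) (q₂ x) ≤ c) :
    hellingerSq (μ.prod ν) (fun z => p₁ z.1 * p₂ z.1 z.2) (fun z => q₁ z.1 * q₂ z.1 z.2)
      ≤ 2 - 2 * (1 - hellingerSq μ p₁ q₁ / 2) * (1 - c / 2) :=
  hellingerSq_joint_le_general μ ν p₁ q₁ p₂ q₂ hp₂meas hq₂meas hp₁pos hq₁pos hp₂pos hq₂pos hp₁int
    hq₁int hp₂int hq₂int hp₁dens hq₁dens hp₂dens hq₂dens c hcond
end

section
/- Let μ and ν be σ-finite measures on measurable spaces 𝒳 and 𝒴 respectively. Let P and Q be probability measures on 𝒳 × 𝒴 with densities p(x, y) = p₁(x) p₂(y|x) and q(x, y) = q₁(x) q₂(y|x) with respect to μ ⊗ ν, where p₁, q₁ are probability densities on 𝒳 and for each x, p₂(·|x), q₂(·|x) are probability densities on 𝒴. Suppose d_TV(P_X, Q_X) ≤ ε₁, where P_X, Q_X are the marginals with densities p₁, q₁, and suppose d_TV(p₂(·|x), q₂(·|x)) ≤ ε₂ for every x ∈ 𝒳, with ε₁, ε₂ ∈ [0, 1]. Then d_TV(P, Q)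 ≤ √(2ε₁) + √(2ε₂). -/
/-!
For probability densities the total variation distance is half the `L¹` distance, the supremum
being attained on `{g ≤ f}`. Writing `p₁p₂ - q₁q₂ = (p₁ - q₁)p₂ + q₁(p₂ - q₂)` and integrating
first in `y` bounds the `L¹` distance of the joint densities by `2ε₁ + 2ε₂`, so
`d_TV(P, Q) ≤ ε₁ + ε₂`; finally `ε ≤ √(2ε)` whenever `ε ≤ 2`.
-/

open MeasureTheory

/-- Total variation distance between two measures:
`d_TV(P, Q) = sup_{A measurable} |P(A) - Q(A)|`. -/
noncomputable def tvDist {X : Type*} [MeasurableSpace X] (P Q : Measure X) : ℝ :=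
  ⨆ A : {A : Set X // MeasurableSet A}, |(P A.1).toReal - (Q A.1).toReal|

section TotalVariation

variable {X : Type*} [MeasurableSpace X] {μ : Measure X}

theorem toReal_withDensity_ofReal_apply {f : X → ℝ} (hf : Measurable f) (hf0 : ∀ x, 0 ≤ f x)
    {A : Set X} (hA : MeasurableSet A) :
    (μ.withDensity (fun x => ENNReal.ofReal (f x)) A).toReal = ∫ x in A, f x ∂μ := by
  rw [withDensity_apply _ hA,
    integral_eq_lintegral_of_nonneg_ae (ae_of_all _ hf0) hf.aestronglyMeasurable.restrict]

variable {h : X → ℝ}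

theorem abs_setIntegral_le_half_integral_abs (hh : Integrable h μ) (h0 : ∫ x, h x ∂μ = 0)
    {A : Set X} (hA : MeasurableSet A) :
    |∫ x in A, h x ∂μ| ≤ 2⁻¹ * ∫ x, |h x| ∂μ := by
  have hcompl : ∫ x in Aᶜ, h x ∂μ = -∫ x in A, h x ∂μ := by
    linarith [integral_add_compl hA hh]
  have hA_le : |∫ x in A, h x ∂μ| ≤ ∫ x in A, |h x| ∂μ := abs_integral_le_integral_abs
  have hAc_le : |∫ x in Aᶜ, h x ∂μ| ≤ ∫ x in Aᶜ, |h x| ∂μ := abs_integral_le_integral_abs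
  rw [hcompl, abs_neg] at hAc_le
  linarith [integral_add_compl hA hh.abs]

theorem setIntegral_nonneg_eq_half_integral_abs (hm : Measurable h) (hh : Integrable h μ)
    (h0 : ∫ x, h x ∂μ = 0) :
    ∫ x in {x | 0 ≤ h x}, h x ∂μ = 2⁻¹ * ∫ x, |h x| ∂μ := by
  have hA : MeasurableSet {x | 0 ≤ h x} := measurableSet_le measurable_const hm
  have hpos : ∫ x in {x | 0 ≤ h x}, |h x| ∂μ = ∫ x in {x | 0 ≤ h x}, h x ∂μ :=
    setIntegral_congr_fun hA fun x hx => abs_of_nonneg hx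
  have hneg : ∫ x in {x | 0 ≤ h x}ᶜ, |h x| ∂μ = -∫ x in {x | 0 ≤ h x}ᶜ, h x ∂μ := by
    rw [← integral_neg]
    exact setIntegral_congr_fun hA.compl fun x hx => abs_of_neg (not_le.1 hx)
  linarith [integral_add_compl hA hh, integral_add_compl hA hh.abs]

theorem tvDist_withDensity_ofReal {f g : X → ℝ}
    (hfm : Measurable f) (hgm : Measurable g) (hf0 : ∀ x, 0 ≤ f x) (hg0 : ∀ x, 0 ≤ g x)
    (hf : Integrable f μ) (hg : Integrable g μ) (hfg : ∫ x, f x ∂μ = ∫ x, g x ∂μ) :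
    tvDist (μ.withDensity fun x => ENNReal.ofReal (f x))
      (μ.withDensity fun x => ENNReal.ofReal (g x)) = 2⁻¹ * ∫ x, |f x - g x| ∂μ := by
  have hsub : Integrable (fun x => f x - g x) μ := hf.sub hg
  have h0 : ∫ x, (f x - g x) ∂μ = 0 := by rw [integral_sub hf hg, hfg, sub_self]
  have hterm (A : {A : Set X // MeasurableSet A}) :
      |((μ.withDensity fun x => ENNReal.ofReal (f x)) A.1).toReal -
        ((μ.withDensity fun x => ENNReal.ofReal (g x)) A.1).toReal| =
        |∫ x in A.1, (f x - g x) ∂μ| := by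
    rw [toReal_withDensity_ofReal_apply hfm hf0 A.2, toReal_withDensity_ofReal_apply hgm hg0 A.2,
      integral_sub hf.integrableOn hg.integrableOn]
  have hle (A : {A : Set X // MeasurableSet A}) :
      |∫ x in A.1, (f x - g x) ∂μ| ≤ 2⁻¹ * ∫ x, |f x - g x| ∂μ :=
    abs_setIntegral_le_half_integral_abs hsub h0 A.2
  unfold tvDist
  simp_rw [hterm]
  refine le_antisymm (ciSup_le hle) (le_ciSup_of_le ⟨_, Set.forall_mem_range.2 hle⟩
    ⟨{x | 0 ≤ f x - g x}, measurableSet_le measurable_const (hfm.sub hgm)⟩ ?_)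
  exact (setIntegral_nonneg_eq_half_integral_abs (h := fun x => f x - g x) (hfm.sub hgm) hsub
    h0).ge.trans (le_abs_self _)

end TotalVariation

theorem abs_mul_sub_mul_le {a b c d : ℝ} (hb : 0 ≤ b) (hc : 0 ≤ c) :
    |a * b - c * d| ≤ |a - c| * b + c * |b - d| := by
  calc |a * b - c * d| = |(a - c) * b + c * (b - d)| := by ring_nf
    _ ≤ |(a - c) * b| + |c * (b - d)| := abs_add_le _ _
    _ = |a - c| * b + c * |b - d| := by rw [abs_mul, abs_mul, abs_of_nonneg hb, abs_of_nonneg hc]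

section JointDensity

variable {𝒳 𝒴 : Type*} [MeasurableSpace 𝒳] [MeasurableSpace 𝒴] {μ : Measure 𝒳} {ν : Measure 𝒴}
  {p₁ q₁ : 𝒳 → ℝ} {p₂ q₂ : 𝒳 → 𝒴 → ℝ}

def jointDensity (p₁ : 𝒳 → ℝ) (p₂ : 𝒳 → 𝒴 → ℝ) (z : 𝒳 × 𝒴) : ℝ := p₁ z.1 * p₂ z.1 z.2

theorem measurable_jointDensity (hp₁ : Measurable p₁) (hp₂ : Measurable (Function.uncurry p₂)) :
    Measurable (jointDensity p₁ p₂) :=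
  (hp₁.comp measurable_fst).mul hp₂

theorem integrable_jointDensity [SFinite ν] (hp₁ : Integrable p₁ μ)
    (hp₂m : Measurable (Function.uncurry p₂)) (hp₂0 : ∀ x y, 0 ≤ p₂ x y)
    (hp₂ : ∀ x, Integrable (p₂ x) ν) (hp₂1 : ∀ x, ∫ y, p₂ x y ∂ν = 1) :
    Integrable (jointDensity p₁ p₂) (μ.prod ν) := by
  refine (integrable_prod_iff (f := jointDensity p₁ p₂) (hp₁.aestronglyMeasurable.comp_fst.mul
    hp₂m.aestronglyMeasurable)).2 ⟨ae_of_all _ fun x => (hp₂ x).const_mul (p₁ x), ?_⟩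
  refine hp₁.norm.congr (ae_of_all _ fun x => ?_)
  simp only [jointDensity, norm_mul, Real.norm_of_nonneg (hp₂0 x _), integral_const_mul, hp₂1,
    mul_one]

theorem integral_jointDensity [SFinite μ] [SFinite ν]
    (hp : Integrable (jointDensity p₁ p₂) (μ.prod ν)) (hp₂1 : ∀ x, ∫ y, p₂ x y ∂ν = 1) :
    ∫ z, jointDensity p₁ p₂ z ∂(μ.prod ν) = ∫ x, p₁ x ∂μ := by
  rw [integral_prod _ hp]
  simp only [jointDensity, integral_const_mul, hp₂1, mul_one]

theorem integral_abs_jointDensity_sub_le [SFinite μ] [SFinite ν] (hq₁0 : ∀ x, 0 ≤ q₁ x)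
    (hp₂0 : ∀ x y, 0 ≤ p₂ x y) (hp₁ : Integrable p₁ μ) (hq₁ : Integrable q₁ μ)
    (hp₂ : ∀ x, Integrable (p₂ x) ν) (hq₂ : ∀ x, Integrable (q₂ x) ν)
    (hp : Integrable (jointDensity p₁ p₂) (μ.prod ν))
    (hq : Integrable (jointDensity q₁ q₂) (μ.prod ν))
    (hp₂1 : ∀ x, ∫ y, p₂ x y ∂ν = 1) (hq₁1 : ∫ x, q₁ x ∂μ = 1) {δ : ℝ}
    (hδ : ∀ x, ∫ y, |p₂ x y - q₂ x y| ∂ν ≤ δ) :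
    ∫ z, |jointDensity p₁ p₂ z - jointDensity q₁ q₂ z| ∂(μ.prod ν) ≤
      ∫ x, |p₁ x - q₁ x| ∂μ + δ := by
  have hslice (x : 𝒳) :
      ∫ y, |p₁ x * p₂ x y - q₁ x * q₂ x y| ∂ν ≤ |p₁ x - q₁ x| + q₁ x * δ := by
    have hfirst : Integrable (fun y => |p₁ x - q₁ x| * p₂ x y) ν := (hp₂ x).const_mul _
    have hsecond : Integrable (fun y => q₁ x * |p₂ x y - q₂ x y|) ν :=
      ((hp₂ x).sub (hq₂ x)).abs.const_mul _
    calc ∫ y, |p₁ x * p₂ x y - q₁ x * q₂ x y| ∂ν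
        ≤ ∫ y, (|p₁ x - q₁ x| * p₂ x y + q₁ x * |p₂ x y - q₂ x y|) ∂ν :=
          integral_mono (((hp₂ x).const_mul _).sub ((hq₂ x).const_mul _)).abs
            (hfirst.add hsecond) fun y => abs_mul_sub_mul_le (hp₂0 x y) (hq₁0 x)
      _ = |p₁ x - q₁ x| + q₁ x * ∫ y, |p₂ x y - q₂ x y| ∂ν := by
          rw [integral_add hfirst hsecond, integral_const_mul, integral_const_mul, hp₂1, mul_one]
      _ ≤ |p₁ x - q₁ x| + q₁ x * δ := by gcongr; exacts [hq₁0 x, hδ x]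
  have hbound : Integrable (fun x => |p₁ x - q₁ x| + q₁ x * δ) μ :=
    (hp₁.sub hq₁).abs.add (hq₁.mul_const δ)
  calc ∫ z, |jointDensity p₁ p₂ z - jointDensity q₁ q₂ z| ∂(μ.prod ν)
      = ∫ x, ∫ y, |p₁ x * p₂ x y - q₁ x * q₂ x y| ∂ν ∂μ := integral_prod _ (hp.sub hq).abs
    _ ≤ ∫ x, (|p₁ x - q₁ x| + q₁ x * δ) ∂μ :=
        integral_mono_of_nonneg (ae_of_all _ fun x => integral_nonneg fun y => abs_nonneg _)
          hbound (ae_of_all _ hslice)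
    _ = ∫ x, |p₁ x - q₁ x| ∂μ + δ := by
        rw [integral_add (f := fun x => |p₁ x - q₁ x|) (hp₁.sub hq₁).abs (hq₁.mul_const δ),
          integral_mul_const, hq₁1, one_mul]

end JointDensity

theorem le_sqrt_two_mul {ε : ℝ} (h : ε ≤ 2) : ε ≤ √(2 * ε) := by
  rcases le_or_gt ε 0 with hneg | hpos
  · exact hneg.trans (Real.sqrt_nonneg _)
  · exact Real.le_sqrt_of_sq_le (by nlinarith)

theorem tvDist_joint_le_general
    {𝒳 𝒴 : Type*} [MeasurableSpace 𝒳] [MeasurableSpace 𝒴]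
    (μ : Measure 𝒳) (ν : Measure 𝒴) [SigmaFinite μ] [SigmaFinite ν]
    (p₁ q₁ : 𝒳 → ℝ) (p₂ q₂ : 𝒳 → 𝒴 → ℝ)
    (P Q : Measure (𝒳 × 𝒴))
    (hp₁meas : Measurable p₁) (hq₁meas : Measurable q₁)
    (hp₂meas : Measurable (Function.uncurry p₂)) (hq₂meas : Measurable (Function.uncurry q₂))
    (hp₁pos : ∀ x, 0 ≤ p₁ x) (hq₁pos : ∀ x, 0 ≤ q₁ x)
    (hp₂pos : ∀ x y, 0 ≤ p₂ x y) (hq₂pos : ∀ x y, 0 ≤ q₂ x y)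
    (hp₁int : Integrable p₁ μ) (hq₁int : Integrable q₁ μ)
    (hp₂int : ∀ x, Integrable (p₂ x) ν) (hq₂int : ∀ x, Integrable (q₂ x) ν)
    (hp₁dens : ∫ x, p₁ x ∂μ = 1) (hq₁dens : ∫ x, q₁ x ∂μ = 1)
    (hp₂dens : ∀ x, ∫ y, p₂ x y ∂ν = 1) (hq₂dens : ∀ x, ∫ y, q₂ x y ∂ν = 1)
    (hP : P = (μ.prod ν).withDensity (fun z => ENNReal.ofReal (p₁ z.1 * p₂ z.1 z.2)))
    (hQ : Q = (μ.prod ν).withDensity (fun z => ENNReal.ofReal (q₁ z.1 * q₂ z.1 z.2)))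
    (ε₁ ε₂ : ℝ) (hε₁1 : ε₁ ≤ 1) (hε₂1 : ε₂ ≤ 1)
    (hmarg : tvDist (μ.withDensity (fun x => ENNReal.ofReal (p₁ x)))
        (μ.withDensity (fun x => ENNReal.ofReal (q₁ x))) ≤ ε₁)
    (hcond : ∀ x, tvDist (ν.withDensity (fun y => ENNReal.ofReal (p₂ x y)))
        (ν.withDensity (fun y => ENNReal.ofReal (q₂ x y))) ≤ ε₂) :
    tvDist P Q ≤ Real.sqrt (2 * ε₁) + Real.sqrt (2 * ε₂) := by
  rw [tvDist_withDensity_ofReal hp₁meas hq₁meas hp₁pos hq₁pos hp₁int hq₁int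
    (hp₁dens.trans hq₁dens.symm)] at hmarg
  have hcondL1 (x : 𝒳) : ∫ y, |p₂ x y - q₂ x y| ∂ν ≤ 2 * ε₂ := by
    have := hcond x
    rw [tvDist_withDensity_ofReal hp₂meas.of_uncurry_left hq₂meas.of_uncurry_left (hp₂pos x)
      (hq₂pos x) (hp₂int x) (hq₂int x) ((hp₂dens x).trans (hq₂dens x).symm)] at this
    linarith
  have hp := integrable_jointDensity hp₁int hp₂meas hp₂pos hp₂int hp₂dens
  have hq := integrable_jointDensity hq₁int hq₂meas hq₂pos hq₂int hq₂dens
  have hpq : ∫ z, jointDensity p₁ p₂ z ∂(μ.prod ν) = ∫ z, jointDensity q₁ q₂ z ∂(μ.prod ν) := by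
    rw [integral_jointDensity hp hp₂dens, integral_jointDensity hq hq₂dens, hp₁dens, hq₁dens]
  have hjoint :
      tvDist P Q = 2⁻¹ * ∫ z, |jointDensity p₁ p₂ z - jointDensity q₁ q₂ z| ∂(μ.prod ν) := by
    rw [hP, hQ]
    exact tvDist_withDensity_ofReal (measurable_jointDensity hp₁meas hp₂meas)
      (measurable_jointDensity hq₁meas hq₂meas) (fun z => mul_nonneg (hp₁pos _) (hp₂pos _ _))
      (fun z => mul_nonneg (hq₁pos _) (hq₂pos _ _)) hp hq hpq
  have hL1 := integral_abs_jointDensity_sub_le hq₁pos hp₂pos hp₁int hq₁int hp₂int hq₂int hp hq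
    hp₂dens hq₁dens hcondL1
  calc tvDist P Q ≤ ε₁ + ε₂ := by linarith
    _ ≤ √(2 * ε₁) + √(2 * ε₂) :=
        add_le_add (le_sqrt_two_mul (by linarith)) (le_sqrt_two_mul (by linarith))

/-- **Total variation bound for joint distributions.** If `P` and `Q` have densities
`p(x,y) = p₁(x) p₂(y|x)` and `q(x,y) = q₁(x) q₂(y|x)` with respect to `μ ⊗ ν`,
the marginals satisfy `d_TV(P_X, Q_X) ≤ ε₁`, and the conditionals satisfy
`d_TV(p₂(·|x), q₂(·|x)) ≤ ε₂` for every `x`, with `ε₁, ε₂ ∈ [0, 1]`, then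
`d_TV(P, Q) ≤ √(2 ε₁) + √(2 ε₂)`. -/
theorem tvDist_joint_le
    {𝒳 𝒴 : Type*} [MeasurableSpace 𝒳] [MeasurableSpace 𝒴]
    (μ : Measure 𝒳) (ν : Measure 𝒴) [SigmaFinite μ] [SigmaFinite ν]
    (p₁ q₁ : 𝒳 → ℝ) (p₂ q₂ : 𝒳 → 𝒴 → ℝ)
    (P Q : Measure (𝒳 × 𝒴))
    (hp₁meas : Measurable p₁) (hq₁meas : Measurable q₁)
    (hp₂meas : Measurable (Function.uncurry p₂)) (hq₂meas : Measurable (Function.uncurry q₂))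
    (hp₁pos : ∀ x, 0 ≤ p₁ x) (hq₁pos : ∀ x, 0 ≤ q₁ x)
    (hp₂pos : ∀ x y, 0 ≤ p₂ x y) (hq₂pos : ∀ x y, 0 ≤ q₂ x y)
    (hp₁int : Integrable p₁ μ) (hq₁int : Integrable q₁ μ)
    (hp₂int : ∀ x, Integrable (p₂ x) ν) (hq₂int : ∀ x, Integrable (q₂ x) ν)
    (hp₁dens : ∫ x, p₁ x ∂μ = 1) (hq₁dens : ∫ x, q₁ x ∂μ = 1)
    (hp₂dens : ∀ x, ∫ y, p₂ x y ∂ν = 1) (hq₂dens : ∀ x, ∫ y, q₂ x y ∂ν = 1)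
    (hP : P = (μ.prod ν).withDensity (fun z => ENNReal.ofReal (p₁ z.1 * p₂ z.1 z.2)))
    (hQ : Q = (μ.prod ν).withDensity (fun z => ENNReal.ofReal (q₁ z.1 * q₂ z.1 z.2)))
    (ε₁ ε₂ : ℝ) (hε₁0 : 0 ≤ ε₁) (hε₁1 : ε₁ ≤ 1) (hε₂0 : 0 ≤ ε₂) (hε₂1 : ε₂ ≤ 1)
    (hmarg : tvDist (μ.withDensity (fun x => ENNReal.ofReal (p₁ x)))
        (μ.withDensity (fun x => ENNReal.ofReal (q₁ x))) ≤ ε₁)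
    (hcond : ∀ x, tvDist (ν.withDensity (fun y => ENNReal.ofReal (p₂ x y)))
        (ν.withDensity (fun y => ENNReal.ofReal (q₂ x y))) ≤ ε₂) :
    tvDist P Q ≤ Real.sqrt (2 * ε₁) + Real.sqrt (2 * ε₂) :=
  tvDist_joint_le_general μ ν p₁ q₁ p₂ q₂ P Q hp₁meas hq₁meas hp₂meas hq₂meas hp₁pos hq₁pos hp₂pos
    hq₂pos hp₁int hq₁int hp₂int hq₂int hp₁dens hq₁dens hp₂dens hq₂dens hP hQ ε₁ ε₂ hε₁1 hε₂1 hmarg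
    hcond
end

section
/- Let P and Q be probability measures on 𝒳 × {0, 1}, where 𝒳 is a measurable space, and let C be a 2 × 2 right-stochastic matrix (nonnegative entries with each row summing to 1) that is invertible. Define the channel-corrupted measures P̃ and Q̃ on 𝒳 × {0, 1} by P̃(A × {j}) = ∑_{i ∈ {0,1}} C_{i,j} · P(A × {i}) for every measurable A ⊆ 𝒳 and j ∈ {0, 1}, and analogously for Q̃. Then d_TV(P̃, Q̃) ≤ d_TV(P, Q) ≤ ‖C^{-1}‖_∞ · d_TV(P̃, Q̃), where ‖C^{-1}‖_∞ = max_i ∑_j |(C^{-1})_{i,j}| is the ∞-operator norm of C^{-1}. -/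
/-!
Fix a measurable `S`. Pushing everything forward along `(x, l) ↦ ((j ↦ (x, j) ∈ S), l)` does
not increase total variation and preserves the channel relation, so one may assume the space
`𝒳` finite. There `P̃(S) - Q̃(S) = ∑ₓ wₓ (P{x} - Q{x})` with weights
`w (y, i) = ∑_{j : (y, j) ∈ S} C i j`, partial sums of the rows of `C`. A row summing to `1`
with absolute sum `≤ r` has all its partial sums in an interval of length `r`, and since
`P - Q` has total mass `0`, pairing it with weights in such an interval gives at most
`r · d_TV(P, Q)`. For `C` itself `r = 1`; for the reverse inequality the same argument runs
with `C⁻¹`, whose rows also sum to `1` and which maps `P̃` back to `P`.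
-/

open MeasureTheory Matrix

/-- The ∞-operator norm of a `2 × 2` real matrix: the maximum absolute row sum. -/
noncomputable def linftyNorm (M : Matrix (Fin 2) (Fin 2) ℝ) : ℝ :=
  Finset.univ.sup' Finset.univ_nonempty (fun i => ∑ j, |M i j|)

/-- `Ptil` is the label-corrupted version of `P` through the noisy channel with
transition matrix `C`: `Ptil(A × {j}) = ∑ i, C i j * P(A × {i})` for every measurable
`A` and label `j`. -/
def IsChannelCorrupted {𝒳 : Type*} [MeasurableSpace 𝒳] (C : Matrix (Fin 2) (Fin 2) ℝ)
    (P Ptil : Measure (𝒳 × Fin 2)) : Prop :=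
  ∀ A : Set 𝒳, MeasurableSet A → ∀ j : Fin 2,
    Ptil (A ×ˢ ({j} : Set (Fin 2))) =
      ∑ i : Fin 2, ENNReal.ofReal (C i j) * P (A ×ˢ ({i} : Set (Fin 2)))

section TotalVariation

variable {X Y : Type*} [MeasurableSpace X] [MeasurableSpace Y] {μ ν : Measure X}

lemma tvDist_comm (μ ν : Measure X) : tvDist μ ν = tvDist ν μ := by
  simp only [tvDist, abs_sub_comm]

lemma abs_measureReal_sub_le_tvDist [IsFiniteMeasure μ] [IsFiniteMeasure ν] {A : Set X}
    (hA : MeasurableSet A) : |μ.real A - ν.real A| ≤ tvDist μ ν := by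
  refine le_ciSup (f := fun A : {A : Set X // MeasurableSet A} => |μ.real A.1 - ν.real A.1|)
    ⟨μ.real Set.univ + ν.real Set.univ, ?_⟩ ⟨A, hA⟩
  rintro _ ⟨B, rfl⟩
  have hμB : μ.real B ≤ μ.real Set.univ := measureReal_mono B.1.subset_univ
  have hνB : ν.real B ≤ ν.real Set.univ := measureReal_mono B.1.subset_univ
  exact abs_sub_le_iff.2 ⟨by linarith [measureReal_nonneg (μ := ν) (s := B.1)],
    by linarith [measureReal_nonneg (μ := μ) (s := B.1)]⟩

lemma tvDist_le {c : ℝ} (h : ∀ A, MeasurableSet A → |μ.real A - ν.real A| ≤ c) :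
    tvDist μ ν ≤ c :=
  have : Nonempty {A : Set X // MeasurableSet A} := ⟨⟨∅, .empty⟩⟩
  ciSup_le fun A => h A.1 A.2

lemma tvDist_map_le [IsFiniteMeasure μ] [IsFiniteMeasure ν] {f : X → Y} (hf : Measurable f) :
    tvDist (μ.map f) (ν.map f) ≤ tvDist μ ν :=
  tvDist_le fun B hB => by
    rw [map_measureReal_apply hf hB, map_measureReal_apply hf hB]
    exact abs_measureReal_sub_le_tvDist (hf hB)

lemma sum_mul_measureReal_singleton_sub_le [Fintype X] [MeasurableSingletonClass X]
    [IsFiniteMeasure μ] [IsFiniteMeasure ν] (huniv : μ Set.univ = ν Set.univ)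
    {w : X → ℝ} {a b : ℝ} (hab : a ≤ b) (hw : ∀ x, w x ∈ Set.Icc a b) :
    ∑ x, w x * (μ.real {x} - ν.real {x}) ≤ (b - a) * tvDist μ ν := by
  classical
  set δ : X → ℝ := fun x => μ.real {x} - ν.real {x}
  set T := Finset.univ.filter fun x => 0 < δ x
  have hδ : ∑ x, δ x = 0 := by
    simp only [δ, Finset.sum_sub_distrib, sum_measureReal_singleton, Finset.coe_univ]
    rw [measureReal_def, measureReal_def, huniv, sub_self]
  calc ∑ x, w x * δ x = ∑ x, (w x - a) * δ x := by
        simp only [sub_mul, Finset.sum_sub_distrib, ← Finset.mul_sum, hδ, mul_zero, sub_zero]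
    _ ≤ ∑ x ∈ T, (w x - a) * δ x := by
        rw [← Finset.sum_filter_add_sum_filter_not Finset.univ fun x => 0 < δ x]
        refine add_le_of_nonpos_right (Finset.sum_nonpos fun x hx => ?_)
        exact mul_nonpos_of_nonneg_of_nonpos (sub_nonneg.2 (hw x).1)
          (not_lt.1 (Finset.mem_filter.1 hx).2)
    _ ≤ ∑ x ∈ T, (b - a) * δ x := Finset.sum_le_sum fun x hx =>
        mul_le_mul_of_nonneg_right (by linarith [(hw x).2]) (Finset.mem_filter.1 hx).2.le
    _ = (b - a) * (μ.real T - ν.real T) := by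
        rw [← Finset.mul_sum, Finset.sum_sub_distrib, sum_measureReal_singleton,
          sum_measureReal_singleton]
    _ ≤ (b - a) * tvDist μ ν := mul_le_mul_of_nonneg_left
        ((le_abs_self _).trans (abs_measureReal_sub_le_tvDist T.measurableSet))
        (sub_nonneg.2 hab)

end TotalVariation

lemma sum_mem_Icc_of_sum_eq_one {κ : Type*} [Fintype κ] {v : κ → ℝ} {r : ℝ}
    (hsum : ∑ j, v j = 1) (habs : ∑ j, |v j| ≤ r) (s : Finset κ) :
    ∑ j ∈ s, v j ∈ Set.Icc ((1 - r) / 2) ((1 + r) / 2) := by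
  classical
  have hsplit := Finset.sum_add_sum_compl s v
  have hsplit_abs := Finset.sum_add_sum_compl s fun j => |v j|
  have hs := Finset.abs_sum_le_sum_abs v s
  have hsc := Finset.abs_sum_le_sum_abs v sᶜ
  have := le_abs_self (∑ j ∈ s, v j)
  have := neg_abs_le (∑ j ∈ s, v j)
  have := le_abs_self (∑ j ∈ sᶜ, v j)
  have := neg_abs_le (∑ j ∈ sᶜ, v j)
  constructor <;> linarith

lemma Matrix.sum_nonsing_inv_row_eq_one {ι : Type*} [Fintype ι] [DecidableEq ι]
    {C : Matrix ι ι ℝ} (hC : IsUnit C) (hrow : ∀ i, ∑ j, C i j = 1)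
    (i : ι) : ∑ j, C⁻¹ i j = 1 := by
  have h1 : C *ᵥ 1 = 1 := funext fun i => by simp [Matrix.mulVec, dotProduct, hrow]
  have := congrFun (congrArg (C⁻¹ *ᵥ ·) h1) i
  simp only [Matrix.mulVec_mulVec, C.nonsing_inv_mul ((C.isUnit_iff_isUnit_det).1 hC),
    Matrix.one_mulVec] at this
  simpa [Matrix.mulVec, dotProduct] using this.symm

section Channel

variable {𝒳 Y ι κ : Type*} [MeasurableSpace 𝒳] [MeasurableSpace Y] [Fintype ι]
  [MeasurableSpace ι] [MeasurableSpace κ]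

/-- `μ'` is the image of `μ` under the channel `M`, read off the real masses of the sets
`A × {j}`. Unlike `IsChannelCorrupted`, `M` may have negative entries, so `C⁻¹` qualifies. -/
def IsChannelImage (M : Matrix ι κ ℝ) (μ : Measure (𝒳 × ι)) (μ' : Measure (𝒳 × κ)) : Prop :=
  ∀ A : Set 𝒳, MeasurableSet A → ∀ j, μ'.real (A ×ˢ {j}) = ∑ i, M i j * μ.real (A ×ˢ {i})

lemma IsChannelCorrupted.isChannelImage {C : Matrix (Fin 2) (Fin 2) ℝ}
    (hC : ∀ i j, 0 ≤ C i j) {μ μ' : Measure (𝒳 × Fin 2)} [IsFiniteMeasure μ] (h : IsChannelCorrupted C μ μ') :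
    IsChannelImage C μ μ' := fun A hA j => by
  rw [measureReal_def, h A hA j, ENNReal.toReal_sum fun i _ => by finiteness]
  simp only [ENNReal.toReal_mul, ENNReal.toReal_ofReal (hC _ j), measureReal_def]

lemma IsChannelCorrupted.measure_univ_eq {C : Matrix (Fin 2) (Fin 2) ℝ}
    (hC : ∀ i j, 0 ≤ C i j) (hCrow : ∀ i, ∑ j, C i j = 1) {μ μ' : Measure (𝒳 × Fin 2)}
    (h : IsChannelCorrupted C μ μ') : μ' Set.univ = μ Set.univ := by
  have hlabels (m : Measure (𝒳 × Fin 2)) : m Set.univ = ∑ j, m (Set.univ ×ˢ {j}) := by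
    simp only [Set.univ_prod, Finset.coe_univ, Set.preimage_univ,
      sum_measure_preimage_singleton _ fun j _ => measurable_snd (.singleton j)]
  have hrow (i : Fin 2) : ∑ j, ENNReal.ofReal (C i j) = 1 := by
    rw [← ENNReal.ofReal_sum_of_nonneg fun j _ => hC i j, hCrow i, ENNReal.ofReal_one]
  simp only [hlabels μ', h _ .univ, hlabels μ]
  rw [Finset.sum_comm]
  simp only [← Finset.sum_mul, hrow, one_mul]

lemma IsChannelCorrupted.isProbabilityMeasure {C : Matrix (Fin 2) (Fin 2) ℝ}
    (hC : ∀ i j, 0 ≤ C i j) (hCrow : ∀ i, ∑ j, C i j = 1) {μ μ' : Measure (𝒳 × Fin 2)}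
    [IsProbabilityMeasure μ] (h : IsChannelCorrupted C μ μ') : IsProbabilityMeasure μ' :=
  ⟨by rw [h.measure_univ_eq hC hCrow, measure_univ]⟩

lemma IsChannelImage.inv [DecidableEq ι] {C : Matrix ι ι ℝ} (hC : IsUnit C)
    {μ μ' : Measure (𝒳 × ι)} (h : IsChannelImage C μ μ') : IsChannelImage C⁻¹ μ' μ :=
  fun A hA i => by
  have hCC : C * C⁻¹ = 1 := C.mul_nonsing_inv ((C.isUnit_iff_isUnit_det).1 hC)
  calc μ.real (A ×ˢ {i}) = ∑ k, (C * C⁻¹) k i * μ.real (A ×ˢ {k}) := by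
        simp [hCC, Matrix.one_apply]
    _ = ∑ j, C⁻¹ j i * ∑ k, C k j * μ.real (A ×ˢ {k}) := by
        simp only [Matrix.mul_apply, Finset.sum_mul, Finset.mul_sum]
        rw [Finset.sum_comm]
        exact Finset.sum_congr rfl fun _ _ => Finset.sum_congr rfl fun _ _ => by ring
    _ = ∑ j, C⁻¹ j i * μ'.real (A ×ˢ {j}) := by simp only [h A hA]

lemma IsChannelImage.map [MeasurableSingletonClass ι] [MeasurableSingletonClass κ]
    {M : Matrix ι κ ℝ} {μ : Measure (𝒳 × ι)} {μ' : Measure (𝒳 × κ)} (h : IsChannelImage M μ μ')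
    {ψ : 𝒳 → Y} (hψ : Measurable ψ) :
    IsChannelImage M (μ.map (Prod.map ψ id)) (μ'.map (Prod.map ψ id)) := by
  intro B hB j
  simp only [map_measureReal_apply (hψ.prodMap measurable_id) (hB.prod (.singleton _)),
    Set.preimage_prod_map_prod, Set.preimage_id, h _ (hψ hB)]

open Classical in
lemma IsChannelImage.measureReal_eq_sum [Fintype κ] [MeasurableSingletonClass κ] [Fintype Y]
    [MeasurableSingletonClass Y] {M : Matrix ι κ ℝ} {μ : Measure (Y × ι)} {μ' : Measure (Y × κ)} [IsFiniteMeasure μ']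
    (h : IsChannelImage M μ μ') (S : Set (Y × κ)) :
    μ'.real S = ∑ x : Y × ι, (∑ j with (x.1, j) ∈ S, M x.2 j) * μ.real {x} := by
  calc μ'.real S = ∑ y, ∑ j, if (y, j) ∈ S then μ'.real ({y} ×ˢ {j}) else 0 := by
        rw [← Fintype.sum_prod_type', ← Finset.sum_filter]
        simp only [Set.singleton_prod_singleton, Prod.mk.eta, sum_measureReal_singleton,
          Finset.coe_filter, Finset.mem_univ, true_and, Set.ofPred_mem_eq]
    _ = ∑ y, ∑ j, ∑ i, if (y, j) ∈ S then M i j * μ.real ({y} ×ˢ {i}) else 0 := by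
        simp only [h _ (measurableSet_singleton _), Finset.sum_ite_irrel, Finset.sum_const_zero]
    _ = _ := by
        simp only [Fintype.sum_prod_type, Finset.sum_filter, Finset.sum_mul, ite_mul, zero_mul,
          Set.singleton_prod_singleton]
        exact Finset.sum_congr rfl fun _ _ => Finset.sum_comm

variable [Nonempty ι] [MeasurableSingletonClass ι] [Fintype κ] [MeasurableSingletonClass κ]

lemma IsChannelImage.measureReal_sub_le_of_fintype [Fintype Y] [MeasurableSingletonClass Y]
    {M : Matrix ι κ ℝ} {r : ℝ} (hrow : ∀ i, ∑ j, M i j = 1) (habs : ∀ i, ∑ j, |M i j| ≤ r)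
    {μ ν : Measure (Y × ι)} {μ' ν' : Measure (Y × κ)} [IsFiniteMeasure μ] [IsFiniteMeasure ν]
    [IsFiniteMeasure μ'] [IsFiniteMeasure ν'] (huniv : μ Set.univ = ν Set.univ)
    (hμ : IsChannelImage M μ μ') (hν : IsChannelImage M ν ν') (S : Set (Y × κ)) :
    μ'.real S - ν'.real S ≤ r * tvDist μ ν := by
  classical
  have hr : 0 ≤ r :=
    (Finset.sum_nonneg fun j _ => abs_nonneg _).trans (habs (Classical.arbitrary ι))
  calc μ'.real S - ν'.real S
      = ∑ x : Y × ι, (∑ j with (x.1, j) ∈ S, M x.2 j) * (μ.real {x} - ν.real {x}) := by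
        simp only [hμ.measureReal_eq_sum, hν.measureReal_eq_sum, ← Finset.sum_sub_distrib,
          mul_sub]
    _ ≤ ((1 + r) / 2 - (1 - r) / 2) * tvDist μ ν :=
        sum_mul_measureReal_singleton_sub_le huniv (by linarith)
          fun x => sum_mem_Icc_of_sum_eq_one (hrow x.2) (habs x.2) _
    _ = r * tvDist μ ν := by ring

lemma IsChannelImage.measureReal_sub_le {M : Matrix ι κ ℝ} {r : ℝ}
    (hrow : ∀ i, ∑ j, M i j = 1) (habs : ∀ i, ∑ j, |M i j| ≤ r) {μ ν : Measure (𝒳 × ι)} {μ' ν' : Measure (𝒳 × κ)}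
    [IsFiniteMeasure μ] [IsFiniteMeasure ν] [IsFiniteMeasure μ'] [IsFiniteMeasure ν']
    (huniv : μ Set.univ = ν Set.univ) (hμ : IsChannelImage M μ μ') (hν : IsChannelImage M ν ν')
    {S : Set (𝒳 × κ)} (hS : MeasurableSet S) :
    μ'.real S - ν'.real S ≤ r * tvDist μ ν := by
  classical
  have hr : 0 ≤ r :=
    (Finset.sum_nonneg fun j _ => abs_nonneg _).trans (habs (Classical.arbitrary ι))
  set ψ : 𝒳 → (κ → Prop) := fun x j => (x, j) ∈ S
  have hψ : Measurable ψ :=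
    measurable_pi_iff.2 fun j => measurableSet_setOfPred.1 (measurable_prodMk_right hS)
  have hΨι : Measurable (Prod.map ψ (id : ι → ι)) := hψ.prodMap measurable_id
  have hΨκ : Measurable (Prod.map ψ (id : κ → κ)) := hψ.prodMap measurable_id
  have hS' : MeasurableSet {p : (κ → Prop) × κ | p.1 p.2} := .of_discrete
  calc μ'.real S - ν'.real S
      = (μ'.map (Prod.map ψ id)).real {p | p.1 p.2} -
          (ν'.map (Prod.map ψ id)).real {p | p.1 p.2} := by
        rw [map_measureReal_apply hΨκ hS', map_measureReal_apply hΨκ hS']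
        rfl
    _ ≤ r * tvDist (μ.map (Prod.map ψ id)) (ν.map (Prod.map ψ id)) :=
        (hμ.map hψ).measureReal_sub_le_of_fintype hrow habs
          (by rw [Measure.map_apply hΨι .univ, Measure.map_apply hΨι .univ]; exact huniv)
          (hν.map hψ) _
    _ ≤ r * tvDist μ ν := mul_le_mul_of_nonneg_left (tvDist_map_le hΨι) hr

theorem IsChannelImage.tvDist_le_mul {M : Matrix ι κ ℝ} {r : ℝ}
    (hrow : ∀ i, ∑ j, M i j = 1) (habs : ∀ i, ∑ j, |M i j| ≤ r) {μ ν : Measure (𝒳 × ι)} {μ' ν' : Measure (𝒳 × κ)}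
    [IsFiniteMeasure μ] [IsFiniteMeasure ν] [IsFiniteMeasure μ'] [IsFiniteMeasure ν']
    (huniv : μ Set.univ = ν Set.univ) (hμ : IsChannelImage M μ μ') (hν : IsChannelImage M ν ν') :
    tvDist μ' ν' ≤ r * tvDist μ ν :=
  tvDist_le fun _ hS => abs_sub_le_iff.2
    ⟨hμ.measureReal_sub_le hrow habs huniv hν hS,
      tvDist_comm μ ν ▸ hν.measureReal_sub_le hrow habs huniv.symm hμ hS⟩

end Channel

/-- **Multiplicative approximation bound for label-corrupted distributions (RCGAN).**
If `P̃` and `Q̃` are obtained from probability measures `P` and `Q` on `𝒳 × {0,1}` by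
passing the label through a noisy channel with invertible right-stochastic transition
matrix `C`, then `d_TV(P̃, Q̃) ≤ d_TV(P, Q) ≤ ‖C⁻¹‖_∞ * d_TV(P̃, Q̃)`. -/
theorem tvDist_corrupted_multiplicative
    {𝒳 : Type*} [MeasurableSpace 𝒳]
    (C : Matrix (Fin 2) (Fin 2) ℝ)
    (hCpos : ∀ i j, 0 ≤ C i j) (hCrow : ∀ i, ∑ j, C i j = 1)
    (hCunit : IsUnit C)
    (P Q Ptil Qtil : Measure (𝒳 × Fin 2))
    [IsProbabilityMeasure P] [IsProbabilityMeasure Q]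
    (hP : IsChannelCorrupted C P Ptil) (hQ : IsChannelCorrupted C Q Qtil) :
    tvDist Ptil Qtil ≤ tvDist P Q ∧ tvDist P Q ≤ linftyNorm C⁻¹ * tvDist Ptil Qtil := by
  have := hP.isProbabilityMeasure hCpos hCrow
  have := hQ.isProbabilityMeasure hCpos hCrow
  have hPC := hP.isChannelImage hCpos
  have hQC := hQ.isChannelImage hCpos
  constructor
  · simpa using hPC.tvDist_le_mul (r := 1) hCrow
      (fun i => by simp only [abs_of_nonneg (hCpos i _), hCrow, le_refl]) (by simp) hQC
  · exact (hPC.inv hCunit).tvDist_le_mul (C.sum_nonsing_inv_row_eq_one hCunit hCrow)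
      (fun i => Finset.univ.le_sup' (fun i => ∑ j, |C⁻¹ i j|) (Finset.mem_univ i)) (by simp)
      (hQC.inv hCunit)
end
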